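/- Total variation separation for the Bernoulli product construction: Let d ≥ 1000 be an integer and let 0 < α < 0.01. For each sign vector e ∈ {−1,+1}^d define the Bernoulli product distribution p_e = ℬ(μ^e₁) × ⋯ × ℬ(μ^e_d) on {0,1}^d, where μ^e_i = (1 + 20·α·e_i)/d. Then for all u, v ∈ {−1,+1}^d, d_TV(p_u, p_v) ≥ (5α/d)·Σ_{i=1}^d 1{u_i ≠ v_i}. -/

import Mathlib

/-!
Let `S` be the set of coordinates where `u` and `v` disagree and `u` takes its more frequent
value there, so `2 M ≥ ham u v` for `M = |S|`. The event "every coordinate in `S` is `0`" has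
probability `t ^ M` under one of `p_u, p_v` and `s ^ M` under the other, where
`t = 1 - (1 - 20α)/d` and `s = 1 - (1 + 20α)/d`. Now `t ^ M - s ^ M ≥ M s ^ (M - 1) (t - s)`,
`t - s = 40α/d`, and `log (1 - a) ≥ -a/(1 - a)` gives `s ^ (M - 1) ≥ exp (-1.25) ≥ 1/4`, so the
two probabilities differ by at least `10αM/d ≥ 5α ham(u, v)/d`.
-/

open MeasureTheory ENNReal

/-- Hamming distance between two vectors. -/
noncomputable def ham {𝒳 : Type*} {n : ℕ} (x y : Fin n → 𝒳) : ℕ :=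
  letI : DecidableEq 𝒳 := Classical.decEq 𝒳
  (Finset.univ.filter fun i => x i ≠ y i).card

/-- Total variation distance: `sup_A (p(A) - q(A))` over measurable sets `A`. -/
noncomputable def tvDist {Ω : Type*} [MeasurableSpace Ω] (p q : Measure Ω) : ℝ :=
  ⨆ S : {S : Set Ω // MeasurableSet S}, ((p S).toReal - (q S).toReal)

/-- The Bernoulli distribution `ℬ(t)` on `{0,1}` (encoded by `Bool`) with mean `t`. -/
noncomputable def bern (t : ℝ) : Measure Bool :=
  ENNReal.ofReal t • Measure.dirac true + ENNReal.ofReal (1 - t) • Measure.dirac false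

/-- The sign `±1` encoded by a boolean (`true = +1`, `false = −1`). -/
def sign (b : Bool) : ℝ := if b then 1 else -1

/-- The Bernoulli product distribution `p_e = ℬ(μ^e₁) × ⋯ × ℬ(μ^e_d)` on `{0,1}^d` with
`μ^e_i = (1 + 20·α·e_i)/d`, for a sign vector `e ∈ {−1,+1}^d` encoded as `Fin d → Bool`. -/
noncomputable def assouadBernProd (d : ℕ) (α : ℝ) (e : Fin d → Bool) :
    Measure (Fin d → Bool) :=
  Measure.pi fun i => bern ((1 + 20 * α * sign (e i)) / d)

lemma mul_pow_pred_mul_sub_le_pow_sub_pow {R : Type*} [CommRing R] [LinearOrder R]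
    [IsStrictOrderedRing R] {s t : R} (hs : 0 ≤ s) (hst : s ≤ t) (n : ℕ) :
    n * s ^ (n - 1) * (t - s) ≤ t ^ n - s ^ n := by
  rw [← geom_sum₂_mul]
  refine mul_le_mul_of_nonneg_right ?_ (sub_nonneg.2 hst)
  have hterm : ∀ i ∈ Finset.range n, s ^ i * s ^ (n - 1 - i) = s ^ (n - 1) := fun i hi => by
    rw [← pow_add, Nat.add_sub_cancel' (by have := Finset.mem_range.1 hi; omega)]
  calc (n : R) * s ^ (n - 1) = ∑ i ∈ Finset.range n, s ^ i * s ^ (n - 1 - i) := by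
        rw [Finset.sum_congr rfl hterm, Finset.sum_const, Finset.card_range, nsmul_eq_mul]
    _ ≤ ∑ i ∈ Finset.range n, t ^ i * s ^ (n - 1 - i) := by gcongr

lemma exp_neg_mul_div_one_sub_le_one_sub_pow {a : ℝ} (ha : a < 1) (n : ℕ) :
    Real.exp (-(n * (a / (1 - a)))) ≤ (1 - a) ^ n := by
  have h1a : 0 < 1 - a := by linarith
  have hlog : -(a / (1 - a)) ≤ Real.log (1 - a) := by
    have := Real.one_sub_inv_le_log_of_pos h1a
    rwa [show 1 - (1 - a)⁻¹ = -(a / (1 - a)) by field_simp; ring] at this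
  calc Real.exp (-(n * (a / (1 - a)))) = Real.exp (-(a / (1 - a))) ^ n := by
        rw [← Real.exp_nat_mul, mul_neg]
    _ ≤ Real.exp (Real.log (1 - a)) ^ n := by gcongr
    _ = (1 - a) ^ n := by rw [Real.exp_log h1a]

lemma quarter_le_one_sub_pow {a : ℝ} (ha : a ≤ 1 / 100) {n : ℕ} (hn : n * a ≤ 6 / 5) :
    1 / 4 ≤ (1 - a) ^ n := by
  have h1a : 0 < 1 - a := by linarith
  have hexp : n * (a / (1 - a)) ≤ 2 * Real.log 2 := by
    rw [← mul_div_assoc, div_le_iff₀ h1a]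
    nlinarith [Real.log_two_gt_d9]
  calc (1 / 4 : ℝ) = Real.exp (-(2 * Real.log 2)) := by
        rw [Real.exp_neg, ← Real.log_rpow two_pos, Real.exp_log (by positivity)]; norm_num
    _ ≤ Real.exp (-(n * (a / (1 - a)))) := by gcongr
    _ ≤ (1 - a) ^ n := exp_neg_mul_div_one_sub_le_one_sub_pow (by linarith) n

lemma Finset.exists_card_le_two_mul_card_filter_eq {ι : Type*} (D : Finset ι) (f : ι → Bool) :
    ∃ c, D.card ≤ 2 * (D.filter fun i => f i = c).card := by
  have := D.card_filter_add_card_filter_not (fun i => f i = true)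
  simp only [Bool.not_eq_true] at this
  by_cases h : (D.filter fun i => f i = true).card ≤ (D.filter fun i => f i = false).card
  exacts [⟨false, by omega⟩, ⟨true, by omega⟩]

lemma ham_eq_card_filter {𝒳 : Type*} [DecidableEq 𝒳] {n : ℕ} (x y : Fin n → 𝒳) :
    ham x y = (Finset.univ.filter fun i => x i ≠ y i).card := by
  unfold ham; congr!

section TotalVariation

variable {Ω : Type*} [MeasurableSpace Ω] {p q : Measure Ω} {A : Set Ω}

lemma measureReal_sub_measureReal_le_tvDist [IsFiniteMeasure p] (hA : MeasurableSet A) :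
    p.real A - q.real A ≤ tvDist p q := by
  refine le_ciSup (f := fun S : {S : Set Ω // MeasurableSet S} => p.real S - q.real S)
    ⟨p.real Set.univ, ?_⟩ ⟨A, hA⟩
  rintro _ ⟨S, rfl⟩
  linarith [measureReal_mono (μ := p) (Set.subset_univ S.1),
    measureReal_nonneg (μ := q) (s := S.1)]

lemma abs_measureReal_sub_measureReal_le_tvDist [IsProbabilityMeasure p]
    [IsProbabilityMeasure q] (hA : MeasurableSet A) :
    |p.real A - q.real A| ≤ tvDist p q := by
  refine abs_le.2 ⟨?_, measureReal_sub_measureReal_le_tvDist hA⟩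
  have := measureReal_sub_measureReal_le_tvDist (p := p) (q := q) hA.compl
  rw [probReal_compl_eq_one_sub hA, probReal_compl_eq_one_sub hA] at this
  linarith

end TotalVariation

lemma bern_singleton_false (t : ℝ) : bern t {false} = ENNReal.ofReal (1 - t) := by
  simp [bern]

lemma isProbabilityMeasure_bern {t : ℝ} (h0 : 0 ≤ t) (h1 : t ≤ 1) :
    IsProbabilityMeasure (bern t) := by
  constructor
  simp [bern, ← ENNReal.ofReal_add h0 (sub_nonneg.2 h1)]

lemma pi_bern_real_pi_false {ι : Type*} [Fintype ι] {m : ι → ℝ} (h0 : ∀ i, 0 ≤ m i)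
    (h1 : ∀ i, m i ≤ 1) (S : Finset ι) :
    (Measure.pi fun i => bern (m i)).real ((S : Set ι).pi fun _ => {false}) =
      ∏ i ∈ S, (1 - m i) := by
  have := fun i => isProbabilityMeasure_bern (h0 i) (h1 i)
  rw [measureReal_def, Measure.pi_pi_finset, ENNReal.toReal_prod]
  refine Finset.prod_congr rfl fun i _ => ?_
  rw [bern_singleton_false, ENNReal.toReal_ofReal (sub_nonneg.2 (h1 i))]

section Assouad

variable {d : ℕ} {α : ℝ}

lemma assouadBernProd_mean_mem_Icc (hd : 2 ≤ d) (hα0 : 0 ≤ α) (hα1 : 20 * α ≤ 1)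
    (b : Bool) :
    (1 + 20 * α * sign b) / d ∈ Set.Icc 0 1 := by
  have hd' : (2 : ℝ) ≤ d := by exact_mod_cast hd
  constructor
  · exact div_nonneg (by cases b <;> simp [sign] <;> linarith) d.cast_nonneg
  · rw [div_le_one (by positivity)]; cases b <;> simp [sign] <;> linarith

lemma isProbabilityMeasure_assouadBernProd (hd : 2 ≤ d) (hα0 : 0 ≤ α) (hα1 : 20 * α ≤ 1)
    (e : Fin d → Bool) : IsProbabilityMeasure (assouadBernProd d α e) :=
  have := fun i => isProbabilityMeasure_bern (assouadBernProd_mean_mem_Icc hd hα0 hα1 (e i)).1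
    (assouadBernProd_mean_mem_Icc hd hα0 hα1 (e i)).2
  inferInstanceAs (IsProbabilityMeasure (Measure.pi _))

lemma assouadBernProd_real_pi_false (hd : 2 ≤ d) (hα0 : 0 ≤ α) (hα1 : 20 * α ≤ 1)
    (e : Fin d → Bool) (S : Finset (Fin d)) :
    (assouadBernProd d α e).real ((S : Set (Fin d)).pi fun _ => {false}) =
      ∏ i ∈ S, (1 - (1 + 20 * α * sign (e i)) / d) :=
  pi_bern_real_pi_false (fun i => (assouadBernProd_mean_mem_Icc hd hα0 hα1 (e i)).1)
    (fun i => (assouadBernProd_mean_mem_Icc hd hα0 hα1 (e i)).2) S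

lemma one_sub_pow_sub_one_sub_pow_le_tvDist (hd : 2 ≤ d) (hα0 : 0 ≤ α) (hα1 : 20 * α ≤ 1)
    {u v : Fin d → Bool} {S : Finset (Fin d)} {c : Bool} (hu : ∀ i ∈ S, u i = c)
    (hv : ∀ i ∈ S, v i ≠ c) :
    (1 - (1 - 20 * α) / d) ^ S.card - (1 - (1 + 20 * α) / d) ^ S.card ≤
      tvDist (assouadBernProd d α u) (assouadBernProd d α v) := by
  have := isProbabilityMeasure_assouadBernProd hd hα0 hα1 u
  have := isProbabilityMeasure_assouadBernProd hd hα0 hα1 v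
  have hZ : MeasurableSet ((S : Set (Fin d)).pi fun _ => ({false} : Set Bool)) :=
    .pi S.countable_toSet fun _ _ => measurableSet_singleton _
  refine le_trans ?_ (abs_measureReal_sub_measureReal_le_tvDist hZ)
  have hpu : ∏ i ∈ S, (1 - (1 + 20 * α * sign (u i)) / d) =
      ∏ i ∈ S, (1 - (1 + 20 * α * sign c) / d) :=
    Finset.prod_congr rfl fun i hi => by rw [hu i hi]
  have hpv : ∏ i ∈ S, (1 - (1 + 20 * α * sign (v i)) / d) =
      ∏ i ∈ S, (1 - (1 + 20 * α * sign !c) / d) :=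
    Finset.prod_congr rfl fun i hi => by rw [Bool.eq_not_of_ne (hv i hi)]
  rw [assouadBernProd_real_pi_false hd hα0 hα1, assouadBernProd_real_pi_false hd hα0 hα1,
    hpu, hpv, Finset.prod_const, Finset.prod_const]
  cases c
  · simp only [sign, Bool.not_false, Bool.false_eq_true, ite_true, ite_false, mul_one, mul_neg,
      ← sub_eq_add_neg (G := ℝ)]
    exact le_abs_self _
  · simp only [sign, Bool.not_true, Bool.false_eq_true, ite_true, ite_false, mul_one, mul_neg,
      ← sub_eq_add_neg (G := ℝ)]
    rw [abs_sub_comm]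
    exact le_abs_self _

lemma ten_mul_div_mul_le_one_sub_pow_sub_one_sub_pow (hd : 1000 ≤ d) (hα0 : 0 ≤ α)
    (hα1 : α < 0.01) {M : ℕ} (hM : M ≤ d) :
    10 * α / d * M ≤ (1 - (1 - 20 * α) / d) ^ M - (1 - (1 + 20 * α) / d) ^ M := by
  have hd' : (1000 : ℝ) ≤ d := by exact_mod_cast hd
  have hd0 : (0 : ℝ) < d := by linarith
  norm_num at hα1
  set a := (1 + 20 * α) / d with ha
  have hda : d * a = 1 + 20 * α := by rw [ha]; field_simp
  have ha0 : 0 ≤ a := by positivity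
  have ha1 : a ≤ 1 / 100 := by rw [ha, div_le_iff₀ hd0]; linarith
  have hquarter : 1 / 4 ≤ (1 - a) ^ (M - 1) := by
    refine quarter_le_one_sub_pow ha1 ?_
    have hM' : ((M - 1 : ℕ) : ℝ) ≤ d := by exact_mod_cast (M.sub_le 1).trans hM
    nlinarith
  have hgap : 1 - (1 - 20 * α) / d - (1 - a) = 40 * α / d := by rw [ha]; field_simp; ring
  calc 10 * α / d * M = M * (1 / 4) * (40 * α / d) := by ring
    _ ≤ M * (1 - a) ^ (M - 1) * (1 - (1 - 20 * α) / d - (1 - a)) := by rw [hgap]; gcongr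
    _ ≤ _ := mul_pow_pred_mul_sub_le_pow_sub_pow (by linarith)
        (sub_nonneg.1 (hgap ▸ by positivity)) M

end Assouad

/-- Total variation separation for the Bernoulli product construction: for `d ≥ 1000` and
`0 < α < 0.01`, `d_TV(p_u, p_v) ≥ (5α/d) · Σ_i 1{u_i ≠ v_i}` for all sign vectors `u, v`. -/
theorem bernoulli_product_tv_separation (d : ℕ) (hd : 1000 ≤ d)
    (α : ℝ) (hα : 0 < α) (hα' : α < 0.01) (u v : Fin d → Bool) :
    5 * α / d * (ham u v : ℝ) ≤ tvDist (assouadBernProd d α u) (assouadBernProd d α v) := by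
  set D := Finset.univ.filter fun i => u i ≠ v i
  have hham : ham u v = D.card := ham_eq_card_filter u v
  obtain ⟨c, hc⟩ := D.exists_card_le_two_mul_card_filter_eq u
  set S := D.filter fun i => u i = c
  have hu : ∀ i ∈ S, u i = c := fun i hi => (Finset.mem_filter.1 hi).2
  have hv : ∀ i ∈ S, v i ≠ c := fun i hi => by
    obtain ⟨hiD, hic⟩ := Finset.mem_filter.1 hi
    exact hic ▸ (Finset.mem_filter.1 hiD).2.symm
  have hα20 : 20 * α ≤ 1 := by norm_num at hα'; linarith
  calc 5 * α / d * (ham u v : ℝ) ≤ 5 * α / d * (2 * S.card) := by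
        rw [hham]; gcongr; exact_mod_cast hc
    _ = 10 * α / d * S.card := by ring
    _ ≤ (1 - (1 - 20 * α) / d) ^ S.card - (1 - (1 + 20 * α) / d) ^ S.card :=
        ten_mul_div_mul_le_one_sub_pow_sub_one_sub_pow hd hα.le hα'
          (S.card_le_univ.trans_eq (Fintype.card_fin d))
    _ ≤ _ := one_sub_pow_sub_one_sub_pow_le_tvDist (by omega) hα.le hα20 hu hv
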